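/- arXiv:1811.03803 — 2 statements merged into one kernel-verified Lean document; each statement's English description precedes it below -/
import Mathlib

section
/- Let ξ_1, ..., ξ_{2s} be the roots (with multiplicity) of a monic polynomial of degree 2s with integer coefficients and nonzero constant term. Then the formal power series F(x) = Σ_{n≥1} n · Π_{j=1}^{2s}(ξ_j^n − 1) · x^n is a rational function of x with integer coefficients. -/
/-!
Expanding the product gives `∏ⱼ (ξⱼⁿ - 1) = ∑_T ±ξ_Tⁿ` over subsets `T`, where `ξ_T = ∏_{j ∈ T} ξⱼ`,
so the series `G = ∑ₙ ∏ⱼ (ξⱼⁿ - 1) xⁿ` times `Q = ∏_T (1 - ξ_T x)` is a polynomial `P`.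
The coefficients of `G` and of `Q` are symmetric integer polynomials in the `ξⱼ`, hence integers by
the fundamental theorem of symmetric polynomials and Vieta's formulas; so those of `P = G Q` are
integers too. Finally `F = x G'`, hence `F Q² = x (P' Q - P Q')`.
-/

open Finset Polynomial
open scoped PowerSeries

namespace MvPolynomial

variable {σ A S : Type*} [Fintype σ] [CommRing A] [CommRing S] [Algebra A S]

theorem aeval_esymm_mem_bot {ξ : σ → S} {R : A[X]}
    (hroots : R.map (algebraMap A S) = ∏ j, (Polynomial.X - Polynomial.C (ξ j)))
    {k : ℕ} (hk : k ≤ Fintype.card σ) :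
    aeval ξ (esymm σ A k) ∈ (⊥ : Subalgebra A S) := by
  have vieta :
      algebraMap A S (R.coeff (Fintype.card σ - k)) = (-1) ^ k * aeval ξ (esymm σ A k) := by
    have h := Multiset.prod_X_sub_C_coeff (univ.val.map ξ) (k := Fintype.card σ - k) (by simp)
    simp only [Multiset.card_map, card_val, card_univ, Multiset.map_map, Function.comp_def,
      Nat.sub_sub_self hk] at h
    rwa [← aeval_esymm_eq_multiset_esymm (σ := σ) (R := A), ← prod_eq_multiset_prod, ← hroots,
      Polynomial.coeff_map] at h
  have hsq : ((-1) ^ k * (-1) ^ k : S) = 1 := by rw [← mul_pow]; simp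
  rw [← one_mul (aeval ξ _), ← hsq, mul_assoc, ← vieta]
  exact Subalgebra.mul_mem _ (Subalgebra.pow_mem _ (Subalgebra.neg_mem _ (Subalgebra.one_mem _)) _)
    (Subalgebra.algebraMap_mem _ _)

theorem IsSymmetric.aeval_mem_bot {ξ : σ → S} {R : A[X]}
    (hroots : R.map (algebraMap A S) = ∏ j, (Polynomial.X - Polynomial.C (ξ j)))
    {p : MvPolynomial σ A} (hp : p.IsSymmetric) :
    aeval ξ p ∈ (⊥ : Subalgebra A S) := by
  obtain ⟨q, hq⟩ := esymmAlgHom_surjective (R := A) (σ := σ) le_rfl ⟨p, hp⟩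
  have hpq : p = aeval (fun i : Fin (Fintype.card σ) => esymm σ A (i + 1)) q := by
    rw [← esymmAlgHom_apply, hq]
  rw [hpq, comp_aeval_apply]
  have hrange := AlgHom.mem_range_self (aeval fun i : Fin (Fintype.card σ) =>
    aeval ξ (esymm σ A (i + 1))) q
  rw [aeval_range] at hrange
  refine Algebra.adjoin_le ?_ hrange
  rintro _ ⟨i, rfl⟩
  exact aeval_esymm_mem_bot hroots i.2

theorem map_aeval_mem_lifts {ξ : σ → S} {R : A[X]}
    (hroots : R.map (algebraMap A S) = ∏ j, (Polynomial.X - Polynomial.C (ξ j)))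
    {ψ : (MvPolynomial σ A)[X]} (hψ : ∀ k, (ψ.coeff k).IsSymmetric) :
    ψ.map (aeval ξ).toRingHom ∈ lifts (algebraMap A S) := by
  rw [lifts_iff_coeff_lifts]
  intro k
  rw [Polynomial.coeff_map, ← Algebra.mem_bot]
  exact (hψ k).aeval_mem_bot hroots

variable (σ A) in
noncomputable def subsetProdPoly : (MvPolynomial σ A)[X] :=
  ∏ T : Finset σ, (1 - Polynomial.C (∏ j ∈ T, X j) * Polynomial.X)

theorem isSymmetric_coeff_subsetProdPoly (k : ℕ) :
    ((subsetProdPoly σ A).coeff k).IsSymmetric := by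
  intro e
  have hinv : (subsetProdPoly σ A).map (rename e).toRingHom = subsetProdPoly σ A := by
    simp only [subsetProdPoly, Polynomial.map_prod, Polynomial.map_sub, Polynomial.map_one,
      Polynomial.map_mul, Polynomial.map_C, Polynomial.map_X, AlgHom.toRingHom_eq_coe,
      RingHom.coe_coe, map_prod, rename_X]
    exact Fintype.prod_equiv (Equiv.finsetCongr e) _ _ fun T => by
      simp [Equiv.finsetCongr_apply, Finset.prod_map]
  conv_rhs => rw [← hinv]
  rw [Polynomial.coeff_map]
  rfl

theorem map_aeval_subsetProdPoly (ξ : σ → S) :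
    (subsetProdPoly σ A).map (aeval ξ).toRingHom =
      ∏ T : Finset σ, (1 - Polynomial.C (∏ j ∈ T, ξ j) * Polynomial.X) := by
  simp [subsetProdPoly, Polynomial.map_prod]

theorem isSymmetric_prod_X_pow_sub_one (n : ℕ) :
    (∏ j, (X j ^ n - 1) : MvPolynomial σ A).IsSymmetric := by
  intro e
  simp only [map_prod, map_sub, map_pow, rename_X, map_one]
  exact Fintype.prod_equiv e _ _ fun _ => rfl

end MvPolynomial

theorem Finset.prod_sub_one {ι B : Type*} [CommRing B] [DecidableEq ι] (s : Finset ι)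
    (x : ι → B) :
    ∏ i ∈ s, (x i - 1) = ∑ t ∈ s.powerset, (-1) ^ #(s \ t) * ∏ i ∈ t, x i := by
  simp_rw [sub_eq_add_neg, prod_add, prod_const, mul_comm]

namespace PowerSeries

variable {B : Type*} [CommRing B]

theorem mk_pow_mul_one_sub_C_mul_X (c : B) : mk (fun n => c ^ n) * (1 - C c * X) = 1 := by
  simpa [rescale_mk, rescale_X] using congrArg (rescale c) (mk_one_mul_one_sub_eq_one (S := B))

theorem mk_sum_mul_pow_mul_prod_one_sub {ι : Type*} [Fintype ι] [DecidableEq ι] (w e : ι → B) :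
    mk (fun n => ∑ i, w i * e i ^ n) *
        ((∏ i, (1 - Polynomial.C (e i) * Polynomial.X) : B[X]) : B⟦X⟧) =
      ((∑ i, Polynomial.C (w i) * ∏ j ∈ univ.erase i, (1 - Polynomial.C (e j) * Polynomial.X) :
        B[X]) : B⟦X⟧) := by
  have hmk : mk (fun n => ∑ i, w i * e i ^ n) = ∑ i, C (w i) * mk fun n => e i ^ n := by
    ext n; simp
  simp only [← Polynomial.coeToPowerSeries.ringHom_apply, map_prod, map_sum, map_mul, map_sub,
    map_one]
  simp only [Polynomial.coeToPowerSeries.ringHom_apply, Polynomial.coe_C, Polynomial.coe_X]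
  rw [hmk, sum_mul]
  refine sum_congr rfl fun i _ => ?_
  rw [← mul_prod_erase univ _ (mem_univ i), ← mul_assoc, mul_assoc (C (w i)),
    mk_pow_mul_one_sub_C_mul_X, mul_one]

theorem mk_prod_pow_sub_one_mul_prod_one_sub {ι : Type*} [Fintype ι] [DecidableEq ι]
    (ξ : ι → B) :
    mk (fun n => ∏ j, (ξ j ^ n - 1)) *
        ((∏ T : Finset ι, (1 - Polynomial.C (∏ j ∈ T, ξ j) * Polynomial.X) : B[X]) : B⟦X⟧) =
      ((∑ T : Finset ι, Polynomial.C ((-1) ^ #(univ \ T)) *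
          ∏ T' ∈ univ.erase T, (1 - Polynomial.C (∏ j ∈ T', ξ j) * Polynomial.X) : B[X]) :
        B⟦X⟧) := by
  rw [← mk_sum_mul_pow_mul_prod_one_sub]
  congr
  ext n
  simp [prod_sub_one, ← prod_pow, powerset_univ]

theorem mk_natCast_mul (a : ℕ → B) : mk (fun n => (n : B) * a n) = X * d⁄dX B (mk a) := by
  ext (_ | n)
  · simp
  · rw [coeff_succ_X_mul, coeff_derivative, coeff_mk, coeff_mk]
    push_cast; ring

theorem X_mul_derivative_mul_sq_of_mul_eq {G : B⟦X⟧} {P Q : B[X]} (h : G * Q = P) :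
    X * d⁄dX B G * ((Q ^ 2 : B[X]) : B⟦X⟧) =
      ((Polynomial.X * (Polynomial.derivative P * Q - P * Polynomial.derivative Q) : B[X]) :
        B⟦X⟧) := by
  have hder := congrArg (d⁄dX B) h
  rw [Derivation.leibniz, derivative_coe, derivative_coe, smul_eq_mul, smul_eq_mul] at hder
  push_cast
  linear_combination (X * (Q : B⟦X⟧)) * hder - (X * (Polynomial.derivative Q : B⟦X⟧)) * h

theorem mem_lifts_of_map_mul_eq {A : Type*} [CommRing A] {f : A →+* B} {G : A⟦X⟧} {Q : A[X]}
    {P : B[X]} (h : map f G * ↑(Q.map f) = ↑P) : P ∈ lifts f := by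
  rw [lifts_iff_coeff_lifts]
  intro n
  rw [← Polynomial.coeff_coe, ← h, polynomial_map_coe, ← map_mul, coeff_map]
  exact Set.mem_range_self _

end PowerSeries

theorem generating_function_rational_general (s : ℕ) (R : Polynomial ℤ)
    (ξ : Fin (2 * s) → ℂ)
    (hroots : R.map (Int.castRingHom ℂ) =
      ∏ j : Fin (2 * s), (Polynomial.X - Polynomial.C (ξ j))) :
    ∃ P Q : Polynomial ℤ, Q ≠ 0 ∧
      (PowerSeries.mk fun n => (n : ℂ) * ∏ j : Fin (2 * s), (ξ j ^ n - 1)) *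
        ((Q.map (Int.castRingHom ℂ)) : PowerSeries ℂ) =
        ((P.map (Int.castRingHom ℂ)) : PowerSeries ℂ) := by
  rw [← algebraMap_int_eq] at hroots ⊢
  obtain ⟨Q, hQ⟩ := MvPolynomial.map_aeval_mem_lifts hroots
    (MvPolynomial.isSymmetric_coeff_subsetProdPoly (σ := Fin (2 * s)) (A := ℤ))
  rw [coe_mapRingHom, MvPolynomial.map_aeval_subsetProdPoly] at hQ
  have hGQ := PowerSeries.mk_prod_pow_sub_one_mul_prod_one_sub ξ
  rw [← hQ] at hGQ
  choose b hb using fun n => Algebra.mem_bot.1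
    ((MvPolynomial.isSymmetric_prod_X_pow_sub_one (σ := Fin (2 * s)) (A := ℤ) n).aeval_mem_bot
      hroots)
  have hG : PowerSeries.map (algebraMap ℤ ℂ) (PowerSeries.mk b) =
      PowerSeries.mk fun n => ∏ j, (ξ j ^ n - 1) := by
    ext n
    rw [PowerSeries.coeff_map, PowerSeries.coeff_mk, PowerSeries.coeff_mk, hb]
    simp
  obtain ⟨P, hP⟩ := PowerSeries.mem_lifts_of_map_mul_eq (G := PowerSeries.mk b)
    (by rw [hG]; exact hGQ)
  rw [coe_mapRingHom] at hP
  refine ⟨Polynomial.X * (derivative P * Q - P * derivative Q), Q ^ 2, ?_, ?_⟩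
  · refine pow_ne_zero 2 ?_
    rintro rfl
    simpa [eval_prod] using congrArg (eval 0) hQ
  · rw [← hP] at hGQ
    simp only [Polynomial.map_pow, Polynomial.map_mul, Polynomial.map_sub, Polynomial.map_X,
      ← derivative_map]
    rw [PowerSeries.mk_natCast_mul, PowerSeries.X_mul_derivative_mul_sq_of_mul_eq hGQ]

theorem generating_function_rational (s : ℕ) (R : Polynomial ℤ) (hmonic : R.Monic)
    (hdeg : R.natDegree = 2 * s) (h0 : R.eval 0 ≠ 0)
    (ξ : Fin (2 * s) → ℂ)
    (hroots : R.map (Int.castRingHom ℂ) =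
      ∏ j : Fin (2 * s), (Polynomial.X - Polynomial.C (ξ j))) :
    ∃ P Q : Polynomial ℤ, Q ≠ 0 ∧
      (PowerSeries.mk fun n => (n : ℂ) * ∏ j : Fin (2 * s), (ξ j ^ n - 1)) *
        ((Q.map (Int.castRingHom ℂ)) : PowerSeries ℂ) =
        ((P.map (Int.castRingHom ℂ)) : PowerSeries ℂ) :=
  generating_function_rational_general s R ξ hroots
end

section
/- Let ξ_1, ..., ξ_{2s} be nonzero complex numbers satisfying ξ_{j+s} = ξ_j^{−1} for j = 1,...,s (it is not required that |ξ_j| ≠ 1). Define F(x) = Σ over subsets S ⊆ {1,...,2s} of (−1)^{2s−|S|} · (Π_{j∈S} ξ_j) x / (1 − (Π_{j∈S} ξ_j) x)². Then F(x) = F(1/x) wherever both sides are defined. -/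
theorem F_subset_sum_invariant (s : ℕ) (ξ : Fin (2 * s) → ℂ) (hξ : ∀ j, ξ j ≠ 0)
    (hpair : ∀ j : Fin s, ξ ⟨(j : ℕ) + s, by omega⟩ = (ξ ⟨(j : ℕ), by omega⟩)⁻¹)
    (F : ℂ → ℂ)
    (hF : F = fun x => ∑ S ∈ (Finset.univ : Finset (Fin (2 * s))).powerset,
      (-1 : ℂ) ^ (2 * s - S.card) * ((∏ j ∈ S, ξ j) * x / (1 - (∏ j ∈ S, ξ j) * x) ^ 2))
    (x : ℂ) (hx : x ≠ 0)
    (hdef : ∀ S ∈ (Finset.univ : Finset (Fin (2 * s))).powerset, (∏ j ∈ S, ξ j) * x ≠ 1)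
    (hdef' : ∀ S ∈ (Finset.univ : Finset (Fin (2 * s))).powerset,
      (∏ j ∈ S, ξ j) * x⁻¹ ≠ 1) :
    F x = F x⁻¹ := by
  subst hF
  -- the product of all ξ j is 1
  have hone : ∏ j, ξ j = 1 := by
    have h2 : s + s = 2 * s := (two_mul s).symm
    have := Fin.prod_univ_add (f := fun j : Fin (s + s) => ξ (Fin.cast h2 j))
    have hcast : ∏ j, ξ j = ∏ j : Fin (s + s), ξ (Fin.cast h2 j) :=
      (Fintype.prod_equiv (finCongr h2) _ _ (fun j => rfl)).symm
    rw [hcast, this]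
    have hl : ∀ i : Fin s, ξ (Fin.cast h2 (Fin.castAdd s i)) = ξ ⟨(i : ℕ), by omega⟩ := by
      intro i; congr 1
    have hr : ∀ i : Fin s, ξ (Fin.cast h2 (Fin.natAdd s i)) = (ξ ⟨(i : ℕ), by omega⟩)⁻¹ := by
      intro i
      have : (Fin.cast h2 (Fin.natAdd s i)) = (⟨(i : ℕ) + s, by omega⟩ : Fin (2 * s)) := by
        apply Fin.ext; simp [Nat.add_comm]
      rw [this, hpair i]
    simp only [hl, hr]
    rw [← Finset.prod_mul_distrib]
    refine Finset.prod_eq_one fun i _ => ?_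
    exact mul_inv_cancel₀ (hξ _)
  simp only [Finset.powerset_univ]
  refine Fintype.sum_bijective compl (Function.Involutive.bijective compl_compl) _ _ ?_
  intro S
  have hmem : ∀ T : Finset (Fin (2 * s)), T ∈ (Finset.univ : Finset (Fin (2 * s))).powerset :=
    fun T => Finset.mem_powerset.2 (Finset.subset_univ T)
  set p := ∏ j ∈ S, ξ j with hp
  have hp0 : p ≠ 0 := Finset.prod_ne_zero_iff.2 fun j _ => hξ j
  have hpc : ∏ j ∈ Sᶜ, ξ j = p⁻¹ := by
    have := Finset.prod_mul_prod_compl S ξ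
    rw [hone] at this
    field_simp
    rw [mul_comm] at this
    exact this
  have hcard : S.card ≤ 2 * s := by
    simpa using Finset.card_le_univ S
  have hcardc : Sᶜ.card = 2 * s - S.card := by
    simp [Finset.card_compl]
  -- sign
  have hsign : (-1 : ℂ) ^ (2 * s - Sᶜ.card) = (-1 : ℂ) ^ (2 * s - S.card) := by
    have h1 : 2 * s - Sᶜ.card = S.card := by omega
    rw [h1]
    have key : (-1 : ℂ) ^ (2 * s - S.card) * (-1 : ℂ) ^ S.card = 1 := by
      rw [← pow_add, Nat.sub_add_cancel hcard, pow_mul]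
      norm_num
    have key2 : (-1 : ℂ) ^ S.card * (-1 : ℂ) ^ S.card = 1 := by
      rw [← pow_add, ← two_mul, pow_mul]; norm_num
    calc (-1 : ℂ) ^ S.card = (-1 : ℂ) ^ S.card * ((-1 : ℂ) ^ (2 * s - S.card) * (-1 : ℂ) ^ S.card) := by
          rw [key, mul_one]
        _ = (-1 : ℂ) ^ (2 * s - S.card) * ((-1 : ℂ) ^ S.card * (-1 : ℂ) ^ S.card) := by ring
        _ = (-1 : ℂ) ^ (2 * s - S.card) := by rw [key2, mul_one]
  -- analytic part
  have hd1 : (1 : ℂ) - p * x ≠ 0 := sub_ne_zero.2 fun h => hdef S (hmem S) h.symm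
  have hd2 : (1 : ℂ) - p⁻¹ * x⁻¹ ≠ 0 := by
    refine sub_ne_zero.2 fun h => hdef' Sᶜ (hmem Sᶜ) ?_
    rw [hpc]; exact h.symm
  have hterm : p * x / (1 - p * x) ^ 2 = p⁻¹ * x⁻¹ / (1 - p⁻¹ * x⁻¹) ^ 2 := by
    rw [div_eq_div_iff (pow_ne_zero 2 hd1) (pow_ne_zero 2 hd2)]
    field_simp
    ring
  rw [hsign, hpc, hterm]
end
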